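/- Let r ≥ 1 be an integer and let γ₁,…,γ_r ∈ M_r(ℂ) be matrices commuting with f such that Tr(γ_i L_j) = δ_{ij} for all 1 ≤ i,j ≤ r. Then for all 1 ≤ i,j ≤ r, 0 ≤ I ≤ i−1 and 0 ≤ J ≤ j−1, the following orthogonality relation holds: Tr( ((1/I!)·ad_{L₂}^I(γ_i)) · (ad_f^J(L_j)) ) = (−1)^I · (2i−2)!/(2i−I−2)! if i = j and I = J, and equals 0 otherwise. -/

import Mathlib

open Matrix

/-- The regular nilpotent element `L₂ = Σ_{i=1}^{r−1} ε_{i,i+1}` (0-based indexing). -/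
noncomputable def L2Mat (r : ℕ) : Matrix (Fin r) (Fin r) ℂ :=
  Matrix.of fun a b => if (a : ℕ) + 1 = (b : ℕ) then 1 else 0

/-- The nilpotent element `f = Σ_{i=1}^{r−1} i(r−i) ε_{i+1,i}`. -/
noncomputable def fMat (r : ℕ) : Matrix (Fin r) (Fin r) ℂ :=
  Matrix.of fun a b =>
    if (b : ℕ) + 1 = (a : ℕ) then (((b : ℕ) : ℂ) + 1) * ((r : ℂ) - (((b : ℕ) : ℂ) + 1)) else 0

/-- `L_i = Σ_{k=1}^{r−i+1} ε_{k,i−1+k}` (1-based `i`). -/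
noncomputable def LMat (r i : ℕ) : Matrix (Fin r) (Fin r) ℂ :=
  Matrix.of fun a b => if (b : ℕ) = (a : ℕ) + (i - 1) then 1 else 0

/-- `ad_X(Y) = [X, Y] = XY − YX`. -/
noncomputable def adM {r : ℕ} (X : Matrix (Fin r) (Fin r) ℂ) :
    Matrix (Fin r) (Fin r) ℂ → Matrix (Fin r) (Fin r) ℂ :=
  fun Y => X * Y - Y * X

/-!
`L₂`, `h = ⁅L₂, f⁆` and `f` form an `sl₂`-triple, and each `L_j` is a primitive vector of weight
`2j - 2` for the adjoint action. Hence `ad_{L₂}^I ad_f^J L_j` is an explicit multiple of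
`ad_f^(J-I) L_j`, and vanishes for `I > J`. Invariance of the trace form moves `ad_{L₂}^I` from
`γ_i` onto `ad_f^J L_j` at the cost of `(-1)^I`. For `I < J` what remains lies in the image of
`ad_f`, which is trace-orthogonal to anything commuting with `f`; for `I = J` it is a multiple of
`L_j`, and `Tr(γ_i L_j) = δ_ij` finishes the computation.
-/

open LieModule Finset
open scoped Nat

attribute [local instance] LieRing.ofAssociativeRing

namespace Matrix

variable {n R : Type*} [Fintype n] [DecidableEq n] [CommRing R]

lemma trace_lie_mul (X A B : Matrix n n R) : (⁅X, A⁆ * B).trace = -(A * ⁅X, B⁆).trace := by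
  simp only [Ring.lie_def, Matrix.sub_mul, Matrix.mul_sub, trace_sub, Matrix.mul_assoc]
  rw [trace_mul_comm X, Matrix.mul_assoc]
  ring

lemma trace_toEnd_pow_mul (X A B : Matrix n n R) (k : ℕ) :
    ((toEnd R _ _ X ^ k) A * B).trace = (-1) ^ k * (A * (toEnd R _ _ X ^ k) B).trace := by
  induction k generalizing B with
  | zero => simp
  | succ k ih =>
    conv_lhs => rw [pow_succ', Module.End.mul_apply, toEnd_apply_apply]
    rw [trace_lie_mul, ih, pow_succ (toEnd R _ _ X), Module.End.mul_apply, toEnd_apply_apply]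
    ring

lemma trace_mul_lie_eq_zero_of_commute {g X : Matrix n n R} (h : Commute g X) (B : Matrix n n R) :
    (g * ⁅X, B⁆).trace = 0 := by
  rw [Ring.lie_def, Matrix.mul_sub, trace_sub, ← Matrix.mul_assoc, h.eq, Matrix.mul_assoc,
    trace_mul_comm X, Matrix.mul_assoc, sub_self]

lemma diagonal_lie_apply (d : n → R) (M : Matrix n n R) (a b : n) :
    ⁅diagonal d, M⁆ a b = (d a - d b) * M a b := by
  simp only [Ring.lie_def, Matrix.sub_apply, diagonal_mul, mul_diagonal]
  ring

end Matrix

namespace IsSl2Triple.HasPrimitiveVectorWith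

variable {R L M : Type*} [CommRing R] [LieRing L] [LieAlgebra R L]
  [AddCommGroup M] [Module R M] [LieRingModule L M] [LieModule R L M]
  {h e f : L} {t : IsSl2Triple h e f} {m : M} {μ : R}

lemma toEnd_e_pow_toEnd_f_pow_add (P : t.HasPrimitiveVectorWith m μ) (I K : ℕ) :
    (toEnd R L M e ^ I) ((toEnd R L M f ^ (I + K)) m) =
      (∏ k ∈ range I, (((K + k + 1 : ℕ) : R) * (μ - (K + k : ℕ)))) • (toEnd R L M f ^ K) m := by
  induction I with
  | zero => simp
  | succ I ih =>
    rw [pow_succ, Module.End.mul_apply, toEnd_apply_apply, show I + 1 + K = K + I + 1 by ring,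
      P.lie_e_pow_succ_toEnd_f, LinearMap.map_smul, add_comm K, ih, smul_smul,
      prod_range_succ]
    congr 1
    push_cast
    ring

lemma toEnd_e_pow_toEnd_f_pow_self (P : t.HasPrimitiveVectorWith m μ) (I : ℕ) :
    (toEnd R L M e ^ I) ((toEnd R L M f ^ I) m) =
      ((I ! : R) * (descPochhammer R I).eval μ) • m := by
  simpa [prod_mul_distrib, descPochhammer_eval_eq_prod_range, ← prod_range_add_one_eq_factorial]
    using P.toEnd_e_pow_toEnd_f_pow_add I 0

lemma toEnd_e_pow_toEnd_f_pow_of_lt (P : t.HasPrimitiveVectorWith m μ) {I J : ℕ} (hJI : J < I) :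
    (toEnd R L M e ^ I) ((toEnd R L M f ^ J) m) = 0 := by
  obtain ⟨K, rfl⟩ := Nat.exists_eq_add_of_lt hJI
  rw [show J + K + 1 = K + 1 + J by ring, pow_add, Module.End.mul_apply,
    P.toEnd_e_pow_toEnd_f_pow_self, map_smul, pow_succ, Module.End.mul_apply, toEnd_apply_apply,
    P.lie_e, map_zero, smul_zero]

end IsSl2Triple.HasPrimitiveVectorWith

lemma descPochhammer_eval_natCast_eq_factorial_div {K : Type*} [Field K] [CharZero K] {n k : ℕ}
    (h : k ≤ n) : (descPochhammer K k).eval (n : K) = n ! / (n - k)! := by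
  rw [descPochhammer_eval_eq_descFactorial, Nat.descFactorial_eq_div h,
    Nat.cast_div (Nat.factorial_dvd_factorial (Nat.sub_le n k)) (by simp [Nat.factorial_ne_zero])]

noncomputable def hMat (r : ℕ) : Matrix (Fin r) (Fin r) ℂ :=
  diagonal fun a => (r : ℂ) - 1 - 2 * (a : ℕ)

variable {r : ℕ}

lemma adM_iterate (X : Matrix (Fin r) (Fin r) ℂ) (k : ℕ) :
    (adM X)^[k] = ⇑(toEnd ℂ _ _ X ^ k) := by
  rw [Module.End.coe_pow]
  rfl

lemma lie_L2Mat_apply (M : Matrix (Fin r) (Fin r) ℂ) (a b : Fin r) :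
    ⁅L2Mat r, M⁆ a b = (if h : (a : ℕ) + 1 < r then M ⟨a + 1, h⟩ b else 0) -
      (if h : 0 < (b : ℕ) then M a ⟨b - 1, by omega⟩ else 0) := by
  rw [Ring.lie_def, Matrix.sub_apply, mul_apply, mul_apply]
  congr 1
  · split_ifs with h
    · rw [Fintype.sum_eq_single ⟨a + 1, h⟩ fun c hc => ?_]
      · simp [L2Mat]
      · simp only [L2Mat, of_apply, ite_mul, one_mul, zero_mul]
        exact if_neg fun hc' => hc (Fin.ext hc'.symm)
    · refine Finset.sum_eq_zero fun c _ => ?_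
      simp only [L2Mat, of_apply, ite_mul, one_mul, zero_mul]
      exact if_neg (by omega)
  · split_ifs with h
    · rw [Fintype.sum_eq_single ⟨b - 1, by omega⟩ fun c hc => ?_]
      · simp [L2Mat, Nat.sub_add_cancel h]
      · simp only [L2Mat, of_apply, mul_ite, mul_one, mul_zero]
        exact if_neg fun hc' => hc (Fin.ext (Nat.eq_sub_of_add_eq hc'))
    · refine Finset.sum_eq_zero fun c _ => ?_
      simp only [L2Mat, of_apply, mul_ite, mul_one, mul_zero]
      exact if_neg (by omega)

lemma lie_L2Mat_fMat : ⁅L2Mat r, fMat r⁆ = hMat r := by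
  ext a b
  rw [lie_L2Mat_apply]
  by_cases hab : a = b
  · subst hab
    have hup : (if h : (a : ℕ) + 1 < r then fMat r ⟨a + 1, h⟩ a else 0) =
        ((a : ℕ) + 1 : ℂ) * (r - ((a : ℕ) + 1)) := by
      split_ifs with h
      · simp [fMat]
      · have : (r : ℂ) = (a : ℕ) + 1 := by exact_mod_cast (by omega : r = a + 1)
        rw [this, sub_self, mul_zero]
    have hdown : (if h : 0 < (a : ℕ) then fMat r a ⟨a - 1, by omega⟩ else 0) =
        ((a : ℕ) : ℂ) * (r - (a : ℕ)) := by
      split_ifs with h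
      · simp [fMat, Nat.sub_add_cancel h, Nat.cast_pred h]
      · simp [show (a : ℕ) = 0 by omega]
    rw [hup, hdown]
    simp only [hMat, diagonal_apply_eq]
    ring
  · have hab' : (a : ℕ) ≠ b := Fin.val_ne_of_ne hab
    simp only [fMat, hMat, of_apply, diagonal_apply_ne _ hab]
    split_ifs <;> first | omega | ring

lemma lie_hMat_L2Mat : ⁅hMat r, L2Mat r⁆ = 2 • L2Mat r := by
  ext a b
  simp only [hMat, diagonal_lie_apply, L2Mat, of_apply, Matrix.smul_apply]
  split_ifs with h
  · rw [← h]
    push_cast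
    ring
  · simp

lemma lie_hMat_fMat : ⁅hMat r, fMat r⁆ = -(2 • fMat r) := by
  ext a b
  simp only [hMat, diagonal_lie_apply, fMat, of_apply, Matrix.neg_apply, Matrix.smul_apply]
  split_ifs with h
  · rw [← h]
    push_cast
    ring
  · simp

lemma hMat_ne_zero (hr : 2 ≤ r) : hMat r ≠ 0 := by
  intro h
  have := congr_fun₂ h ⟨0, by omega⟩ ⟨0, by omega⟩
  simp only [hMat, diagonal_apply_eq, Matrix.zero_apply, Nat.cast_zero, mul_zero, sub_zero,
    sub_eq_zero] at this
  exact absurd (by exact_mod_cast this) (by omega : r ≠ 1)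

lemma isSl2Triple_hMat_L2Mat_fMat (hr : 2 ≤ r) : IsSl2Triple (hMat r) (L2Mat r) (fMat r) where
  h_ne_zero := hMat_ne_zero hr
  lie_e_f := lie_L2Mat_fMat
  lie_h_e_nsmul := lie_hMat_L2Mat
  lie_h_f_nsmul := lie_hMat_fMat

lemma lie_L2Mat_LMat (j : ℕ) : ⁅L2Mat r, LMat r j⁆ = 0 := by
  ext a b
  rw [lie_L2Mat_apply]
  simp only [LMat, of_apply, Matrix.zero_apply]
  split_ifs <;> first | omega | simp

lemma lie_hMat_LMat (j : ℕ) : ⁅hMat r, LMat r j⁆ = ((2 * j - 2 : ℕ) : ℂ) • LMat r j := by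
  ext a b
  simp only [hMat, diagonal_lie_apply, LMat, of_apply, Matrix.smul_apply]
  split_ifs with h
  · rw [h, show 2 * j - 2 = 2 * (j - 1) by omega]
    push_cast
    ring
  · simp

lemma LMat_ne_zero {j : ℕ} (hj : j - 1 < r) : LMat r j ≠ 0 := by
  intro h
  have := congr_fun₂ h ⟨0, by omega⟩ ⟨j - 1, hj⟩
  simp [LMat] at this

lemma hasPrimitiveVectorWith_LMat (hr : 2 ≤ r) {j : ℕ} (hj : j - 1 < r) :
    (isSl2Triple_hMat_L2Mat_fMat hr).HasPrimitiveVectorWith (LMat r j) ((2 * j - 2 : ℕ) : ℂ) where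
  ne_zero := LMat_ne_zero hj
  lie_h := lie_hMat_LMat j
  lie_e := lie_L2Mat_LMat j

theorem orthogonality_relation (r : ℕ)
    (γ : ℕ → Matrix (Fin r) (Fin r) ℂ)
    (hcomm : ∀ i : ℕ, 1 ≤ i → i ≤ r → γ i * fMat r = fMat r * γ i)
    (htr : ∀ i j : ℕ, 1 ≤ i → i ≤ r → 1 ≤ j → j ≤ r →
      (γ i * LMat r j).trace = if i = j then 1 else 0) :
    ∀ i j I J : ℕ, 1 ≤ i → i ≤ r → 1 ≤ j → j ≤ r → I ≤ i - 1 → J ≤ j - 1 →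
      ((((1 : ℂ) / (Nat.factorial I : ℂ)) • ((adM (L2Mat r))^[I] (γ i))) *
          ((adM (fMat r))^[J] (LMat r j))).trace =
        if i = j ∧ I = J then
          (-1 : ℂ) ^ I * ((Nat.factorial (2 * i - 2) : ℂ) / (Nat.factorial (2 * i - I - 2) : ℂ))
        else 0 := by
  intro i j I J hi hir hj hjr hI hJ
  -- for `r = 1` all three matrices vanish, so there is no `sl₂`-triple, but also nothing to prove
  obtain rfl | hr : r = 1 ∨ 2 ≤ r := by omega
  · obtain ⟨rfl, rfl, rfl, rfl⟩ : i = 1 ∧ j = 1 ∧ I = 0 ∧ J = 0 := by omega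
    simpa using htr 1 1 le_rfl le_rfl le_rfl le_rfl
  have P := hasPrimitiveVectorWith_LMat hr (j := j) (by omega)
  rw [adM_iterate, adM_iterate, Matrix.smul_mul, trace_smul, trace_toEnd_pow_mul, smul_eq_mul]
  rcases lt_trichotomy I J with hIJ | rfl | hJI
  · obtain ⟨K, rfl⟩ : ∃ K, J = I + (K + 1) := ⟨J - I - 1, by omega⟩
    rw [P.toEnd_e_pow_toEnd_f_pow_add, pow_succ', Module.End.mul_apply, toEnd_apply_apply,
      Matrix.mul_smul, trace_smul, trace_mul_lie_eq_zero_of_commute (hcomm i hi hir),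
      if_neg (by omega)]
    simp
  · rw [P.toEnd_e_pow_toEnd_f_pow_self, Matrix.mul_smul, trace_smul, htr i j hi hir hj hjr]
    by_cases hij : i = j
    · subst hij
      have hIfact : (I ! : ℂ) ≠ 0 := Nat.cast_ne_zero.2 I.factorial_ne_zero
      rw [if_pos rfl, if_pos ⟨rfl, rfl⟩, descPochhammer_eval_natCast_eq_factorial_div (by omega),
        show 2 * i - 2 - I = 2 * i - I - 2 by omega, smul_eq_mul, mul_one]
      field_simp
    · simp [hij]
  · rw [P.toEnd_e_pow_toEnd_f_pow_of_lt hJI, if_neg (by omega)]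
    simp
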